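/- arXiv:2504.03400 — 2 statements merged into one kernel-verified Lean document; each statement's English description precedes it below -/
import Mathlib

section
/- Under the plane-stress St. Venant–Kirchhoff law S_α = E/(1−ν²) (E_α + ν E_β) (α ≠ β), if the principal strains satisfy E₁ > 0, E₂ ≤ 0 (wrinkled state per strain criterion) and tr(E) = E₁ + E₂ > 0, then the strain-split positive stress S⁺ (defined via spectral decomposition of the strain tensor) satisfies S⁺ : M₂ = (Eν/(1−ν²)) tr(E) > 0, violating the uniaxial tension condition, assuming E > 0 and 0 < ν < 1. -/
open Matrix

/-- Frobenius inner product A : B = trace(Aᵀ B). -/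
noncomputable def frob (A B : Matrix (Fin 2) (Fin 2) ℝ) : ℝ := (Aᵀ * B).trace

/-- Heaviside function: 1 for strictly positive arguments, 0 otherwise. -/
noncomputable def Hp (x : ℝ) : ℝ := if 0 < x then 1 else 0

theorem strain_split_violates_uniaxial_tension
    (EY ν : ℝ) (hEY : 0 < EY) (hν : 0 < ν) (hν' : ν < 1)
    (E₁ E₂ : ℝ) (hE₁ : 0 < E₁) (hE₂ : E₂ ≤ 0) (htr : 0 < E₁ + E₂)
    (N : Fin 2 → (Fin 2 → ℝ))
    (hortho : ∀ α β, N α ⬝ᵥ N β = if α = β then 1 else 0)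
    (M₁ M₂ : Matrix (Fin 2) (Fin 2) ℝ)
    (hM₁ : M₁ = vecMulVec (N 0) (N 0)) (hM₂ : M₂ = vecMulVec (N 1) (N 1))
    (Splus : Matrix (Fin 2) (Fin 2) ℝ)
    (hSplus : Splus = (EY / (1 - ν ^ 2)) •
      ((1 - ν) • ((Hp E₁ * E₁) • M₁ + (Hp E₂ * E₂) • M₂) +
        (ν * Hp (E₁ + E₂) * (E₁ + E₂)) • (1 : Matrix (Fin 2) (Fin 2) ℝ))) :
    frob Splus M₂ = EY * ν / (1 - ν ^ 2) * (E₁ + E₂) ∧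
      0 < frob Splus M₂ := by
  have h00 := hortho 0 0
  have h01 := hortho 0 1
  have h11 := hortho 1 1
  simp only [if_pos rfl, if_neg (by decide : (0 : Fin 2) ≠ 1)] at h00 h01 h11
  simp only [dotProduct, Fin.sum_univ_two] at h00 h01 h11
  norm_num at h00 h01 h11
  have hHtr : Hp (E₁ + E₂) = 1 := if_pos htr
  have hH2 : Hp E₂ * E₂ = 0 := by simp [Hp, not_lt.2 hE₂]
  have hν2 : 0 < 1 - ν ^ 2 := by nlinarith
  have key : frob Splus M₂ = EY * ν / (1 - ν ^ 2) * (E₁ + E₂) := by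
    subst hSplus hM₁ hM₂
    simp only [frob, Matrix.trace, Matrix.diag, Fin.sum_univ_two, Matrix.mul_apply,
      Matrix.transpose_apply, Matrix.smul_apply, Matrix.add_apply, vecMulVec_apply,
      Matrix.one_apply, hHtr, hH2, smul_eq_mul]
    norm_num
    linear_combination (EY/(1-ν^2)*(1-ν)*Hp E₁*E₁*(N 0 0 * N 1 0 + N 0 1 * N 1 1)) * h01 + (EY/(1-ν^2)*ν*(E₁+E₂)) * h11
  refine ⟨key, key ▸ ?_⟩
  have : 0 < EY * ν / (1 - ν ^ 2) := by positivity
  positivity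
end

section
/- With modified Poisson ratio ν* = H⁺(E₂ + νE₁)·ν, the mixed-criterion positive stress S⁺ = (E/(1−ν*²)) Σ_{α≠β} H⁺(E_α + ν*E_β)(E_α + ν*E_β) M_α satisfies S⁺ : M₂ = 0 whenever E₂ + νE₁ ≤ 0 and E₂ ≤ 0 (i.e., in the wrinkled state the uniaxial tension condition holds). -/
open Matrix

theorem mixed_criterion_uniaxial_tension
    (EY ν : ℝ) (hEY : 0 < EY) (hν : 0 < ν) (hν' : ν < 1)
    (E₁ E₂ : ℝ) (hord : E₁ ≥ E₂)
    (N : Fin 2 → (Fin 2 → ℝ))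
    (hortho : ∀ α β, N α ⬝ᵥ N β = if α = β then 1 else 0)
    (M₁ M₂ : Matrix (Fin 2) (Fin 2) ℝ)
    (hM₁ : M₁ = vecMulVec (N 0) (N 0)) (hM₂ : M₂ = vecMulVec (N 1) (N 1))
    (νs : ℝ) (hνs : νs = Hp (E₂ + ν * E₁) * ν)
    (Splus : Matrix (Fin 2) (Fin 2) ℝ)
    (hSplus : Splus = (EY / (1 - νs ^ 2)) •
      ((Hp (E₁ + νs * E₂) * (E₁ + νs * E₂)) • M₁ +
       (Hp (E₂ + νs * E₁) * (E₂ + νs * E₁)) • M₂))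
    (hwr₁ : E₂ + ν * E₁ ≤ 0) (hwr₂ : E₂ ≤ 0) :
    frob Splus M₂ = 0 := by
  have hH : Hp (E₂ + ν * E₁) = 0 := by simp [Hp, not_lt.2 hwr₁]
  have hνs0 : νs = 0 := by simp [hνs, hH]
  have hH2 : Hp E₂ = 0 := by simp [Hp, not_lt.2 hwr₂]
  have h01 := hortho 0 1
  simp [dotProduct, Fin.sum_univ_two] at h01
  subst hM₁ hM₂ hSplus hνs0
  simp only [hH2, mul_zero, zero_mul, add_zero, zero_smul]
  simp [frob, Matrix.trace, Matrix.mul_apply, Matrix.diag, vecMulVec_apply,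
    Fin.sum_univ_two]
  linear_combination (EY * Hp E₁ * E₁ * (N 0 0 * N 1 0 + N 0 1 * N 1 1)) * h01
end
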